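/- Let A₊ be a symmetric complex n×n matrix whose imaginary part Im A₊ is positive definite. Then: (i) the matrix I − iA₊ is invertible; (ii) the matrix B = (I − iA₊)^{−1} A₊ is symmetric; (iii) the linear map κ : ℂ^{2n} → ℂ^{2n}, κ(y,η) = (y − iη, η + iBη − By), maps the subspace { (y, −iy) : y ∈ ℂⁿ } into { (x,ξ) ∈ ℂ^{2n} : x = 0 } and maps the subspace { (y, A₊y) : y ∈ ℂⁿ } into { (x,ξ) ∈ ℂ^{2n} : ξ = 0 }. -/

import Mathlib

/-!
Write `A = Re A + i Im A`. Symmetry makes `Re A` Hermitian, so `Im ⟨v, A v⟩ = ⟨v, (Im A) v⟩ > 0`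
for `v ≠ 0`. If `(I - iA) v = 0`, then `⟨v, v⟩ = i ⟨v, A v⟩` has negative real part, so `v = 0`:
this gives (i). The matrices `A` and `M = I - iA` are symmetric and commute, hence so do `M⁻¹`
and `A`, which gives (ii); and `B M = A`, i.e. `B - iBA = A`, which is the second half of (iii).
-/

open Complex Matrix
open scoped ComplexOrder

namespace Matrix

variable {ι : Type*} [Fintype ι]

theorem IsSymm.mul_of_commute {R : Type*} [CommSemiring R] {A B : Matrix ι ι R}
    (hA : A.IsSymm) (hB : B.IsSymm) (h : Commute A B) : (A * B).IsSymm := by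
  rw [IsSymm, transpose_mul, hA.eq, hB.eq, h.eq]

theorem commute_nonsing_inv_right {R : Type*} [CommRing R] [DecidableEq ι] {A M : Matrix ι ι R}
    (h : Commute A M) : Commute A M⁻¹ := by
  by_cases hM : IsUnit M
  · obtain ⟨u, rfl⟩ := hM
    rw [← coe_units_inv]
    exact h.units_inv_right
  · rw [nonsing_inv_eq_ringInverse, Ring.inverse_non_unit _ hM]
    exact Commute.zero_right A

theorem re_star_dotProduct_map_ofReal_mulVec (T : Matrix ι ι ℝ) (v : ι → ℂ) :
    (star v ⬝ᵥ T.map ofReal *ᵥ v).re =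
      (fun j => (v j).re) ⬝ᵥ T *ᵥ (fun j => (v j).re) +
        (fun j => (v j).im) ⬝ᵥ T *ᵥ (fun j => (v j).im) := by
  simp only [dotProduct, mulVec, re_sum, Finset.mul_sum, ← Finset.sum_add_distrib]
  refine Finset.sum_congr rfl fun j _ => Finset.sum_congr rfl fun k _ => ?_
  simp only [Pi.star_apply, map_apply, mul_re, mul_im, star_def, conj_re, conj_im, ofReal_re,
    ofReal_im]
  ring

theorem PosDef.re_star_dotProduct_map_ofReal_mulVec_pos {T : Matrix ι ι ℝ} (hT : T.PosDef)
    {v : ι → ℂ} (hv : v ≠ 0) : 0 < (star v ⬝ᵥ T.map ofReal *ᵥ v).re := by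
  have hpos : ∀ w : ι → ℝ, w ≠ 0 → 0 < w ⬝ᵥ T *ᵥ w := fun w hw => by
    simpa only [star_trivial] using hT.dotProduct_mulVec_pos hw
  have hnonneg : ∀ w : ι → ℝ, 0 ≤ w ⬝ᵥ T *ᵥ w := fun w => by
    simpa only [star_trivial] using hT.posSemidef.dotProduct_mulVec_nonneg w
  rw [re_star_dotProduct_map_ofReal_mulVec]
  by_cases h : (fun j => (v j).re) = 0
  · refine add_pos_of_nonneg_of_pos (hnonneg _) (hpos _ fun h' => hv ?_)
    exact funext fun j => Complex.ext (congrFun h j) (congrFun h' j)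
  · exact add_pos_of_pos_of_nonneg (hpos _ h) (hnonneg _)

theorem IsSymm.im_star_dotProduct_mulVec_pos {A : Matrix ι ι ℂ} (hA : A.IsSymm)
    (hIm : (A.map im).PosDef) {v : ι → ℂ} (hv : v ≠ 0) : 0 < (star v ⬝ᵥ A *ᵥ v).im := by
  have hdecomp : A = (A.map re).map ofReal + I • (A.map im).map ofReal := by
    ext j k
    simp [mul_comm I, re_add_im]
  have hReal : ((A.map re).map ofReal).IsHermitian :=
    IsHermitian.ext fun j k => by simp [hA.apply j k]
  have hReal_im : (star v ⬝ᵥ (A.map re).map ofReal *ᵥ v).im = 0 :=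
    hReal.im_star_dotProduct_mulVec_self v
  rw [hdecomp, add_mulVec, smul_mulVec, dotProduct_add, dotProduct_smul, smul_eq_mul, add_im,
    hReal_im, I_mul_im, zero_add]
  exact hIm.re_star_dotProduct_map_ofReal_mulVec_pos hv

theorem isUnit_one_sub_I_smul [DecidableEq ι] {A : Matrix ι ι ℂ}
    (hA : ∀ v : ι → ℂ, v ≠ 0 → 0 < (star v ⬝ᵥ A *ᵥ v).im) : IsUnit (1 - I • A) := by
  refine (isUnit_iff_isUnit_det _).mpr (isUnit_iff_ne_zero.mpr fun hdet => ?_)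
  obtain ⟨v, hv, hker⟩ := exists_mulVec_eq_zero_iff.mpr hdet
  have hnorm : star v ⬝ᵥ v = I * (star v ⬝ᵥ A *ᵥ v) := by
    have := congrArg (star v ⬝ᵥ ·) hker
    simpa [sub_mulVec, dotProduct_sub, smul_mulVec, dotProduct_smul, sub_eq_zero] using this
  have hnonneg : 0 ≤ (star v ⬝ᵥ v).re := (Complex.le_def.mp (dotProduct_star_self_nonneg v)).1
  rw [hnorm, I_mul_re] at hnonneg
  linarith [hA v hv]

end Matrix

/-- Let `A₊` be a symmetric complex `n×n` matrix with `Im A₊` positive definite.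
Then (i) `I − iA₊` is invertible; (ii) `B = (I − iA₊)⁻¹A₊` is symmetric;
(iii) the map `κ(y,η) = (y − iη, η + iBη − By)` sends `{(y, −iy)}` into
`{x = 0}` and `{(y, A₊y)}` into `{ξ = 0}`. -/
theorem statement_19 {n : ℕ} (Ap : Matrix (Fin n) (Fin n) ℂ) (hAp : Ap.IsSymm)
    (hIm : (Matrix.of fun j k => (Ap j k).im).PosDef) :
    IsUnit (1 - Complex.I • Ap) ∧
    ((1 - Complex.I • Ap)⁻¹ * Ap).IsSymm ∧
    (∀ y η : Fin n → ℂ, η = -(Complex.I • y) → y - Complex.I • η = 0) ∧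
    (∀ y η : Fin n → ℂ, η = Ap.mulVec y →
      η + Complex.I • ((1 - Complex.I • Ap)⁻¹ * Ap).mulVec η
        - ((1 - Complex.I • Ap)⁻¹ * Ap).mulVec y = 0) := by
  set M := 1 - I • Ap with hM
  have hunit : IsUnit M :=
    isUnit_one_sub_I_smul fun _ hv => hAp.im_star_dotProduct_mulVec_pos hIm hv
  have hMsymm : M.IsSymm := isSymm_one.sub (hAp.smul I)
  have hcomm : Commute Ap M := (Commute.one_right Ap).sub_right ((Commute.refl Ap).smul_right I)
  have hBM : M⁻¹ * Ap * M = Ap := by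
    rw [mul_assoc, hcomm.eq, nonsing_inv_mul_cancel_left M Ap ((isUnit_iff_isUnit_det M).mp hunit)]
  refine ⟨hunit, hMsymm.inv.mul_of_commute hAp (commute_nonsing_inv_right hcomm).symm, ?_, ?_⟩
  · rintro y η rfl
    simp [smul_smul]
  · rintro y η rfl
    have hB : Ap + I • (M⁻¹ * Ap * Ap) - M⁻¹ * Ap = 0 := by
      nth_rewrite 1 [← hBM]
      simp only [hM, mul_sub, mul_one, mul_smul_comm]
      abel
    rw [mulVec_mulVec, ← smul_mulVec, ← add_mulVec, ← sub_mulVec, hB, zero_mulVec]
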